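/- (Local valuation formula) For every finite abstract simplicial complex G, every x ∈ G and every m ≥ 1, w_m(B(x)) = w_m(U(x)) - (-1)^m w_m(S(x)), where S(x) = B(x) \ U(x). -/
import Mathlib


open Finset

variable {α : Type*} [DecidableEq α]

/-- The star `U(x) = {y ∈ G : x ⊆ y}` of a simplex `x` in the complex `G`. -/
def starC (G : Finset (Finset α)) (x : Finset α) : Finset (Finset α) :=
  G.filter (fun y => x ⊆ y)

/-- The unit ball `B(x)`: the closure of the star `U(x)`. -/
def ballC (G : Finset (Finset α)) (x : Finset α) : Finset (Finset α) :=
  G.filter (fun z => ∃ y ∈ G, x ⊆ y ∧ z ⊆ y)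

/-- The unit sphere `S(x) = B(x) \ U(x)`. -/
def sphereC (G : Finset (Finset α)) (x : Finset α) : Finset (Finset α) :=
  ballC G x \ starC G x

/-- `G` is a finite abstract simplicial complex: a finite set of nonempty finite sets
closed under taking nonempty subsets. -/
def IsComplex (G : Finset (Finset α)) : Prop :=
  (∀ x ∈ G, x.Nonempty) ∧ ∀ x ∈ G, ∀ y, y ⊆ x → y.Nonempty → y ∈ G

/-- The intersection `x_1 ∩ ... ∩ x_m` of a tuple of finite sets (for `m ≥ 1`). -/
def interTuple {m : ℕ} (X : Fin m → Finset α) : Finset α :=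
  (Finset.univ.sup X).filter (fun v => ∀ j, v ∈ X j)

/-- The `m`-th characteristic `w_m(A)`. -/
def wm (m : ℕ) (A : Finset (Finset α)) : ℤ :=
  ∑ X ∈ Fintype.piFinset (fun _ : Fin m => A),
    if interTuple X ∈ A then ∏ j, (-1 : ℤ) ^ ((X j).card - 1) else 0

/-- `U` is open in the star topology on `G`: a union of stars. -/
def SCOpen (G U : Finset (Finset α)) : Prop :=
  ∃ T ⊆ G, U = T.biUnion (fun x => starC G x)

section LocalVal
set_option linter.unusedSectionVars false
section
variable {G : Finset (Finset ℕ)} {x : Finset ℕ} (hG : IsComplex G) (hx : x ∈ G)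
include hG hx

lemma mem_ballC_iff {z : Finset ℕ} : z ∈ ballC G x ↔ z.Nonempty ∧ z ∪ x ∈ G := by
  constructor
  · rintro hz
    rw [ballC, mem_filter] at hz
    obtain ⟨hzG, y, hyG, hxy, hzy⟩ := hz
    exact ⟨hG.1 z hzG, hG.2 y hyG _ (union_subset hzy hxy) ⟨_, mem_union_right _ (hG.1 x hx).choose_spec⟩⟩
  · rintro ⟨hne, hu⟩
    rw [ballC, mem_filter]
    exact ⟨hG.2 _ hu z subset_union_left hne, z ∪ x, hu, subset_union_right, subset_union_left⟩

lemma mem_starC_iff {z : Finset ℕ} : z ∈ starC G x ↔ z ∪ x ∈ G ∧ x ⊆ z := by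
  rw [starC, mem_filter]
  constructor
  · rintro ⟨hzG, hxz⟩
    rw [union_eq_left.mpr hxz]
    exact ⟨hzG, hxz⟩
  · rintro ⟨hu, hxz⟩
    rw [union_eq_left.mpr hxz] at hu
    exact ⟨hu, hxz⟩

lemma mem_ball0_iff {z : Finset ℕ} : z ∈ insert ∅ (ballC G x) ↔ z ∪ x ∈ G := by
  rw [mem_insert, mem_ballC_iff hG hx]
  constructor
  · rintro (rfl | ⟨_, h⟩)
    · simpa using hx
    · exact h
  · intro h
    rcases eq_or_ne z ∅ with rfl | hne
    · exact Or.inl rfl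
    · exact Or.inr ⟨nonempty_iff_ne_empty.mpr hne, h⟩

lemma mem_sphere0_iff {z : Finset ℕ} : z ∈ insert ∅ (sphereC G x) ↔ z ∪ x ∈ G ∧ ¬ x ⊆ z := by
  rw [mem_insert, sphereC, mem_sdiff, mem_ballC_iff hG hx, mem_starC_iff hG hx]
  constructor
  · rintro (rfl | ⟨⟨hne, hu⟩, hns⟩)
    · exact ⟨by simpa using hx, fun h => absurd (subset_empty.mp h) (nonempty_iff_ne_empty.mp (hG.1 x hx))⟩
    · exact ⟨hu, fun h => hns ⟨hu, h⟩⟩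
  · rintro ⟨hu, hnxz⟩
    rcases eq_or_ne z ∅ with rfl | hne
    · exact Or.inl rfl
    · exact Or.inr ⟨⟨nonempty_iff_ne_empty.mpr hne, hu⟩, fun h => hnxz h.2⟩

end

lemma mem_interTuple {m : ℕ} (hm : 1 ≤ m) {X : Fin m → Finset ℕ} {a : ℕ} :
    a ∈ interTuple X ↔ ∀ j, a ∈ X j := by
  rw [interTuple, mem_filter]
  constructor
  · exact fun h => h.2
  · intro h
    exact ⟨mem_sup.mpr ⟨⟨0, hm⟩, mem_univ _, h _⟩, h⟩

lemma interTuple_subset {m : ℕ} (hm : 1 ≤ m) (X : Fin m → Finset ℕ) (j : Fin m) :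
    interTuple X ⊆ X j := fun a ha => (mem_interTuple hm).mp ha j

lemma interTuple_union {m : ℕ} (hm : 1 ≤ m) {x : Finset ℕ} {σ τ : Fin m → Finset ℕ}
    (hσ : ∀ j, Disjoint (σ j) x) (hτ : ∀ j, τ j ⊆ x) :
    interTuple (fun j => σ j ∪ τ j) = interTuple σ ∪ interTuple τ := by
  ext a
  simp only [mem_union, mem_interTuple hm]
  by_cases hax : a ∈ x
  · constructor
    · intro h
      exact Or.inr (fun j => ((h j).resolve_left (fun hs => disjoint_left.mp (hσ j) hs hax)))
    · rintro (h | h) j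
      · exact Or.inl (h j)
      · exact Or.inr (h j)
  · constructor
    · intro h
      exact Or.inl (fun j => ((h j).resolve_right (fun ht => hax (hτ j ht))))
    · rintro (h | h) j
      · exact Or.inl (h j)
      · exact Or.inr (h j)

-- sign conversion
lemma wm_eq (m : ℕ) (A : Finset (Finset ℕ)) (hA : ∀ z ∈ A, z.Nonempty) :
    wm m A = (-1 : ℤ) ^ m *
      ∑ X ∈ Fintype.piFinset (fun _ : Fin m => A),
        (if interTuple X ∈ A then ∏ j, (-1 : ℤ) ^ ((X j).card) else 0) := by
  rw [wm, Finset.mul_sum]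
  refine Finset.sum_congr rfl (fun X hX => ?_)
  rw [Fintype.mem_piFinset] at hX
  by_cases h : interTuple X ∈ A
  · simp only [h, if_true]
    have : ∀ j : Fin m, (-1 : ℤ) ^ ((X j).card - 1) = (-1) * (-1 : ℤ) ^ ((X j).card) := by
      intro j
      have h1 : 1 ≤ (X j).card := Finset.card_pos.mpr (hA _ (hX j))
      obtain ⟨k, hk⟩ : ∃ k, (X j).card = k + 1 := ⟨(X j).card - 1, by omega⟩
      rw [hk]
      simp [pow_succ]
    rw [Finset.prod_congr rfl (fun j _ => this j), Finset.prod_mul_distrib]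
    simp [Finset.card_univ]
  · simp [h]

-- extend sum by inserting ∅
lemma sum_insert_empty (m : ℕ) (A : Finset (Finset ℕ)) (h0 : ∅ ∉ A)
    (F : (Fin m → Finset ℕ) → ℤ) (hF : ∀ X, (∃ j, X j = ∅) → F X = 0) :
    ∑ X ∈ Fintype.piFinset (fun _ : Fin m => A), F X
      = ∑ X ∈ Fintype.piFinset (fun _ : Fin m => insert ∅ A), F X := by
  refine Finset.sum_subset ?_ ?_
  · intro X hX
    rw [Fintype.mem_piFinset] at hX ⊢
    exact fun j => Finset.mem_insert_of_mem (hX j)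
  · intro X hX hX'
    rw [Fintype.mem_piFinset] at hX hX'
    push_neg at hX'
    obtain ⟨j, hj⟩ := hX'
    refine hF X ⟨j, ?_⟩
    rcases Finset.mem_insert.mp (hX j) with h | h
    · exact h
    · exact absurd h hj

-- power formula
lemma sum_piFinset_pow (m : ℕ) (T : Finset (Finset ℕ)) (h : Finset ℕ → ℤ) :
    ∑ τ ∈ Fintype.piFinset (fun _ : Fin m => T), ∏ j, h (τ j)
      = (∑ t ∈ T, h t) ^ m := by
  rw [← Finset.prod_univ_sum]
  simp [Finset.card_univ]

-- master decomposition
lemma master (m : ℕ) (x : Finset ℕ) (E Tset D : Finset (Finset ℕ))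
    (hE : ∀ z ∈ E, Disjoint z x) (hT : Tset ⊆ x.powerset)
    (hD : ∀ z, z ∈ D ↔ (z \ x ∈ E ∧ z ∩ x ∈ Tset))
    (F : (Fin m → Finset ℕ) → ℤ) :
    ∑ X ∈ Fintype.piFinset (fun _ : Fin m => D), F X
      = ∑ p ∈ (Fintype.piFinset (fun _ : Fin m => E)) ×ˢ (Fintype.piFinset (fun _ : Fin m => Tset)),
          F (fun j => p.1 j ∪ p.2 j) := by
  refine Finset.sum_nbij' (fun X => (fun j => X j \ x, fun j => X j ∩ x))
    (fun p j => p.1 j ∪ p.2 j) ?_ ?_ ?_ ?_ ?_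
  · intro X hX
    rw [Fintype.mem_piFinset] at hX
    rw [Finset.mem_product, Fintype.mem_piFinset, Fintype.mem_piFinset]
    exact ⟨fun j => ((hD _).mp (hX j)).1, fun j => ((hD _).mp (hX j)).2⟩
  · intro p hp
    rw [Finset.mem_product, Fintype.mem_piFinset, Fintype.mem_piFinset] at hp
    rw [Fintype.mem_piFinset]
    intro j
    rw [hD]
    have hd : Disjoint (p.1 j) x := hE _ (hp.1 j)
    have hs : p.2 j ⊆ x := Finset.mem_powerset.mp (hT (hp.2 j))
    constructor
    · rw [Finset.union_sdiff_distrib, Finset.sdiff_eq_self_iff_disjoint.mpr hd,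
        Finset.sdiff_eq_empty_iff_subset.mpr hs, Finset.union_empty]
      exact hp.1 j
    · rw [Finset.union_inter_distrib_right, (Finset.disjoint_iff_inter_eq_empty).mp hd,
        Finset.inter_eq_left.mpr hs, Finset.empty_union]
      exact hp.2 j
  · intro X _
    funext j
    exact Finset.sdiff_union_inter _ _
  · intro p hp
    rw [Finset.mem_product, Fintype.mem_piFinset, Fintype.mem_piFinset] at hp
    have : ∀ j, (p.1 j ∪ p.2 j) \ x = p.1 j ∧ (p.1 j ∪ p.2 j) ∩ x = p.2 j := by
      intro j
      have hd : Disjoint (p.1 j) x := hE _ (hp.1 j)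
      have hs : p.2 j ⊆ x := Finset.mem_powerset.mp (hT (hp.2 j))
      constructor
      · rw [Finset.union_sdiff_distrib, Finset.sdiff_eq_self_iff_disjoint.mpr hd,
          Finset.sdiff_eq_empty_iff_subset.mpr hs, Finset.union_empty]
      · rw [Finset.union_inter_distrib_right, (Finset.disjoint_iff_inter_eq_empty).mp hd,
          Finset.inter_eq_left.mpr hs, Finset.empty_union]
    ext : 1 <;> funext j
    · exact (this j).1
    · exact (this j).2
  · intro X hX
    congr 1
    funext j
    exact (Finset.sdiff_union_inter _ _).symm
lemma sum_filter_superset {x w : Finset ℕ} (hw : w ⊆ x) :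
    ∑ t ∈ x.powerset.filter (fun t => w ⊆ t), (-1 : ℤ) ^ t.card
      = if w = x then (-1 : ℤ) ^ x.card else 0 := by
  have key : ∑ t ∈ x.powerset.filter (fun t => w ⊆ t), (-1 : ℤ) ^ t.card
      = (-1 : ℤ) ^ w.card * ∑ u ∈ (x \ w).powerset, (-1 : ℤ) ^ u.card := by
    rw [Finset.mul_sum]
    refine Finset.sum_nbij' (fun t => t \ w) (fun u => u ∪ w) ?_ ?_ ?_ ?_ ?_
    · intro t ht
      rw [mem_filter, mem_powerset] at ht
      rw [mem_powerset]
      exact fun a ha => by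
        rw [mem_sdiff] at ha ⊢
        exact ⟨ht.1 ha.1, ha.2⟩
    · intro u hu
      rw [mem_powerset] at hu
      rw [mem_filter, mem_powerset]
      refine ⟨Finset.union_subset (fun a ha => (Finset.mem_sdiff.mp (hu ha)).1) hw, subset_union_right⟩
    · intro t ht
      rw [mem_filter] at ht
      exact Finset.sdiff_union_of_subset ht.2
    · intro u hu
      rw [mem_powerset] at hu
      show (u ∪ w) \ w = u
      rw [Finset.union_sdiff_right, Finset.sdiff_eq_self_iff_disjoint]
      exact Finset.disjoint_left.mpr (fun a ha => (Finset.mem_sdiff.mp (hu ha)).2)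
    · intro t ht
      rw [mem_filter] at ht
      rw [← pow_add]
      congr 1
      rw [Finset.card_sdiff_of_subset ht.2]
      have := Finset.card_le_card ht.2
      omega
  rw [key, Finset.sum_powerset_neg_one_pow_card]
  by_cases h : w = x
  · subst h
    simp
  · have : x \ w ≠ ∅ := by
      rw [Ne, Finset.sdiff_eq_empty_iff_subset]
      exact fun hxw => h (Finset.Subset.antisymm hw hxw)
    simp [h, this]

lemma indicator_nonempty {x y : Finset ℕ} (hy : y ⊆ x) :
    ∑ w ∈ x.powerset.filter (fun w => w.Nonempty),
      (-1 : ℤ) ^ (w.card + 1) * (if w ⊆ y then 1 else 0)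
      = if y.Nonempty then 1 else 0 := by
  have step1 : ∑ w ∈ x.powerset.filter (fun w => w.Nonempty),
      (-1 : ℤ) ^ (w.card + 1) * (if w ⊆ y then 1 else 0)
      = ∑ w ∈ y.powerset.filter (fun w => w.Nonempty), (-1 : ℤ) ^ (w.card + 1) := by
    have hcong : ∑ w ∈ x.powerset.filter (fun w => w.Nonempty),
        (-1 : ℤ) ^ (w.card + 1) * (if w ⊆ y then 1 else 0)
        = ∑ w ∈ x.powerset.filter (fun w => w.Nonempty),
          (if w ⊆ y then (-1 : ℤ) ^ (w.card + 1) else 0) := by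
      refine Finset.sum_congr rfl (fun w _ => ?_)
      by_cases h : w ⊆ y <;> simp [h]
    rw [hcong, ← Finset.sum_filter]
    congr 1
    ext w
    simp only [mem_filter, mem_powerset]
    exact ⟨fun ⟨⟨_, hne⟩, hwy⟩ => ⟨hwy, hne⟩, fun ⟨hwy, hne⟩ => ⟨⟨hwy.trans hy, hne⟩, hwy⟩⟩
  rw [step1]
  have hfil : y.powerset.filter (fun w => w.Nonempty) = y.powerset.erase ∅ := by
    ext w
    simp [Finset.nonempty_iff_ne_empty, and_comm]
  rw [hfil, Finset.sum_erase_eq_sub (Finset.empty_mem_powerset y)]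
  have : ∑ w ∈ y.powerset, (-1 : ℤ) ^ (w.card + 1)
      = -∑ w ∈ y.powerset, (-1 : ℤ) ^ w.card := by
    rw [← Finset.sum_neg_distrib]
    exact Finset.sum_congr rfl (fun w _ => by rw [pow_succ]; ring)
  rw [this, Finset.sum_powerset_neg_one_pow_card]
  rcases Finset.eq_empty_or_nonempty y with rfl | hne
  · simp
  · simp [hne, Finset.nonempty_iff_ne_empty.mp hne]

lemma tau_eval {m : ℕ} (hm : 1 ≤ m) {x : Finset ℕ} (T : Finset (Finset ℕ))
    (hT : T ⊆ x.powerset) :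
    ∑ τ ∈ Fintype.piFinset (fun _ : Fin m => T),
      (if (interTuple τ).Nonempty then ∏ j, (-1 : ℤ) ^ ((τ j).card) else 0)
      = ∑ w ∈ x.powerset.filter (fun w => w.Nonempty),
          (-1 : ℤ) ^ (w.card + 1) * (∑ t ∈ T, if w ⊆ t then (-1 : ℤ) ^ t.card else 0) ^ m := by
  have step1 : ∀ τ ∈ Fintype.piFinset (fun _ : Fin m => T),
      (if (interTuple τ).Nonempty then ∏ j, (-1 : ℤ) ^ ((τ j).card) else 0)
      = ∑ w ∈ x.powerset.filter (fun w => w.Nonempty),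
          (-1 : ℤ) ^ (w.card + 1) * (if w ⊆ interTuple τ then ∏ j, (-1 : ℤ) ^ ((τ j).card) else 0) := by
    intro τ hτ
    rw [Fintype.mem_piFinset] at hτ
    have hsub : interTuple τ ⊆ x := fun a ha =>
      Finset.mem_powerset.mp (hT (hτ ⟨0, hm⟩)) ((mem_interTuple hm).mp ha ⟨0, hm⟩)
    have := indicator_nonempty hsub
    calc (if (interTuple τ).Nonempty then ∏ j, (-1 : ℤ) ^ ((τ j).card) else 0)
        = (if (interTuple τ).Nonempty then (1:ℤ) else 0) * ∏ j, (-1 : ℤ) ^ ((τ j).card) := by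
          by_cases h : (interTuple τ).Nonempty <;> simp [h]
      _ = _ := by
          rw [← this, Finset.sum_mul]
          refine Finset.sum_congr rfl (fun w _ => ?_)
          by_cases h : w ⊆ interTuple τ <;> simp [h, mul_assoc]
  rw [Finset.sum_congr rfl step1, Finset.sum_comm]
  refine Finset.sum_congr rfl (fun w hw => ?_)
  rw [← Finset.mul_sum]
  congr 1
  have step2 : ∀ τ ∈ Fintype.piFinset (fun _ : Fin m => T),
      (if w ⊆ interTuple τ then ∏ j, (-1 : ℤ) ^ ((τ j).card) else 0)
      = ∏ j, (if w ⊆ τ j then (-1 : ℤ) ^ ((τ j).card) else 0) := by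
    intro τ _
    by_cases h : w ⊆ interTuple τ
    · rw [if_pos h]
      refine (Finset.prod_congr rfl (fun j _ => ?_)).symm
      have hj : w ⊆ τ j := fun a ha => (mem_interTuple hm).mp (h ha) j
      rw [if_pos hj]
    · rw [if_neg h]
      have : ∃ j, ¬ w ⊆ τ j := by
        by_contra hc
        push_neg at hc
        exact h (fun a ha => (mem_interTuple hm).mpr (fun j => hc j ha))
      obtain ⟨j, hj⟩ := this
      exact (Finset.prod_eq_zero (Finset.mem_univ j) (by rw [if_neg hj])).symm
  rw [Finset.sum_congr rfl step2]
  have := sum_piFinset_pow m T (fun t => if w ⊆ t then (-1 : ℤ) ^ t.card else 0)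
  exact this

lemma ite_pow_zero {P : Prop} [Decidable P] (d : ℤ) (m : ℕ) (hm : 1 ≤ m) :
    (if P then d else 0) ^ m = if P then d ^ m else 0 := by
  by_cases h : P
  · simp [h]
  · simp [h, zero_pow (by omega : m ≠ 0)]

lemma A1_ball {m : ℕ} (hm : 1 ≤ m) {x : Finset ℕ} (hx : x.Nonempty) :
    ∑ τ ∈ Fintype.piFinset (fun _ : Fin m => x.powerset),
      (if (interTuple τ).Nonempty then ∏ j, (-1 : ℤ) ^ ((τ j).card) else 0)
      = -((-1 : ℤ) ^ x.card) * ((-1 : ℤ) ^ x.card) ^ m := by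
  rw [tau_eval hm x.powerset subset_rfl]
  have : ∀ w ∈ x.powerset.filter (fun w => w.Nonempty),
      (-1 : ℤ) ^ (w.card + 1) * (∑ t ∈ x.powerset, if w ⊆ t then (-1 : ℤ) ^ t.card else 0) ^ m
      = if w = x then (-1 : ℤ) ^ (x.card + 1) * ((-1 : ℤ) ^ x.card) ^ m else 0 := by
    intro w hw
    rw [mem_filter, mem_powerset] at hw
    rw [← Finset.sum_filter, sum_filter_superset hw.1, ite_pow_zero _ _ hm]
    by_cases h : w = x
    · simp [h]
    · simp [h]
  rw [Finset.sum_congr rfl this, Finset.sum_ite_eq' _ x]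
  have hxmem : x ∈ x.powerset.filter (fun w => w.Nonempty) := by
    simp [Finset.mem_powerset, hx]
  rw [if_pos hxmem, pow_succ]
  ring

lemma Wsum {x : Finset ℕ} (hx : x.Nonempty) :
    ∑ w ∈ x.powerset.filter (fun w => w.Nonempty), (-1 : ℤ) ^ (w.card + 1) = 1 := by
  have := indicator_nonempty (x := x) (y := x) subset_rfl
  rw [if_pos hx] at this
  calc ∑ w ∈ x.powerset.filter (fun w => w.Nonempty), (-1 : ℤ) ^ (w.card + 1)
      = ∑ w ∈ x.powerset.filter (fun w => w.Nonempty),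
          (-1 : ℤ) ^ (w.card + 1) * (if w ⊆ x then 1 else 0) := by
        refine Finset.sum_congr rfl (fun w hw => ?_)
        rw [mem_filter, mem_powerset] at hw
        rw [if_pos hw.1, mul_one]
    _ = 1 := this

lemma A1_sphere {m : ℕ} (hm : 1 ≤ m) {x : Finset ℕ} (hx : x.Nonempty) :
    ∑ τ ∈ Fintype.piFinset (fun _ : Fin m => x.powerset.erase x),
      (if (interTuple τ).Nonempty then ∏ j, (-1 : ℤ) ^ ((τ j).card) else 0)
      = (-(-1 : ℤ) ^ x.card) ^ m * (1 + (-1 : ℤ) ^ x.card) := by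
  rw [tau_eval hm _ (Finset.erase_subset _ _)]
  set d : ℤ := (-1 : ℤ) ^ x.card with hd
  have hxW : x ∈ x.powerset.filter (fun w => w.Nonempty) := by
    simp [Finset.mem_powerset, hx]
  have inner : ∀ w ∈ x.powerset.filter (fun w => w.Nonempty),
      (∑ t ∈ x.powerset.erase x, if w ⊆ t then (-1 : ℤ) ^ t.card else 0)
        = (if w = x then d else 0) - d := by
    intro w hw
    rw [mem_filter, mem_powerset] at hw
    rw [Finset.sum_erase_eq_sub (Finset.mem_powerset_self x), ← Finset.sum_filter,
      sum_filter_superset hw.1, if_pos hw.1]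
  have terms : ∀ w ∈ x.powerset.filter (fun w => w.Nonempty),
      (-1 : ℤ) ^ (w.card + 1) * (∑ t ∈ x.powerset.erase x, if w ⊆ t then (-1 : ℤ) ^ t.card else 0) ^ m
      = if w = x then 0 else (-1 : ℤ) ^ (w.card + 1) * (-d) ^ m := by
    intro w hw
    rw [inner w hw]
    by_cases h : w = x
    · simp [h, zero_pow (by omega : m ≠ 0)]
    · simp [h]
  rw [Finset.sum_congr rfl terms]
  rw [← Finset.sum_erase_add _ _ hxW, if_pos rfl, add_zero]
  have : ∀ w ∈ (x.powerset.filter (fun w => w.Nonempty)).erase x,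
      (if w = x then 0 else (-1 : ℤ) ^ (w.card + 1) * (-d) ^ m)
      = (-1 : ℤ) ^ (w.card + 1) * (-d) ^ m := by
    intro w hw
    rw [if_neg (Finset.mem_erase.mp hw).1]
  rw [Finset.sum_congr rfl this, ← Finset.sum_mul,
    Finset.sum_erase_eq_sub hxW, Wsum hx]
  have : (1 : ℤ) - (-1) ^ (x.card + 1) = 1 + d := by
    rw [pow_succ]
    simp [hd]
  rw [this]
  ring

lemma tau_single {m : ℕ} (x : Finset ℕ) :
    ∑ τ ∈ Fintype.piFinset (fun _ : Fin m => ({x} : Finset (Finset ℕ))),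
      ∏ j, (-1 : ℤ) ^ ((τ j).card) = ((-1 : ℤ) ^ x.card) ^ m := by
  rw [sum_piFinset_pow m ({x} : Finset (Finset ℕ)) (fun t => (-1 : ℤ) ^ t.card),
    Finset.sum_singleton]

lemma tau_total {m : ℕ} (hm : 1 ≤ m) {x : Finset ℕ} (hx : x.Nonempty) :
    ∑ τ ∈ Fintype.piFinset (fun _ : Fin m => x.powerset),
      ∏ j, (-1 : ℤ) ^ ((τ j).card) = 0 := by
  rw [sum_piFinset_pow m x.powerset (fun t => (-1 : ℤ) ^ t.card),
    Finset.sum_powerset_neg_one_pow_card, if_neg (Finset.nonempty_iff_ne_empty.mp hx), zero_pow (by omega : m ≠ 0)]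

lemma tau_total_sphere {m : ℕ} {x : Finset ℕ} (hx : x.Nonempty) :
    ∑ τ ∈ Fintype.piFinset (fun _ : Fin m => x.powerset.erase x),
      ∏ j, (-1 : ℤ) ^ ((τ j).card) = (-(-1 : ℤ) ^ x.card) ^ m := by
  rw [sum_piFinset_pow m (x.powerset.erase x) (fun t => (-1 : ℤ) ^ t.card),
    Finset.sum_erase_eq_sub (Finset.mem_powerset_self x),
    Finset.sum_powerset_neg_one_pow_card, if_neg (Finset.nonempty_iff_ne_empty.mp hx)]
  ring

end LocalVal


section Reduce
variable {G : Finset (Finset ℕ)} {x : Finset ℕ}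

lemma mem_E_iff (hG : IsComplex G) (hx : x ∈ G) {z : Finset ℕ} :
    z ∈ insert ∅ (G.filter fun s => Disjoint s x ∧ s ∪ x ∈ G)
      ↔ Disjoint z x ∧ z ∪ x ∈ G := by
  rw [mem_insert, mem_filter]
  constructor
  · rintro (rfl | ⟨_, h⟩)
    · simpa using hx
    · exact h
  · rintro ⟨hd, hu⟩
    rcases eq_or_ne z ∅ with rfl | hne
    · exact Or.inl rfl
    · exact Or.inr ⟨hG.2 _ hu z subset_union_left (nonempty_iff_ne_empty.2 hne), hd, hu⟩

lemma reduce_core (m : ℕ) (hm : 1 ≤ m) (E Tset D : Finset (Finset ℕ))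
    (hE : ∀ z ∈ E, Disjoint z x) (hT : Tset ⊆ x.powerset)
    (hD : ∀ z, z ∈ D ↔ (z \ x ∈ E ∧ z ∩ x ∈ Tset)) :
    ∑ X ∈ Fintype.piFinset (fun _ : Fin m => D),
        (if (interTuple X).Nonempty then ∏ j, (-1 : ℤ) ^ ((X j).card) else 0)
      = ∑ σ ∈ Fintype.piFinset (fun _ : Fin m => E),
          (if (interTuple σ).Nonempty
            then (∏ j, (-1 : ℤ) ^ ((σ j).card)) *
              (∑ τ ∈ Fintype.piFinset (fun _ : Fin m => Tset), ∏ j, (-1 : ℤ) ^ ((τ j).card))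
            else (∏ j, (-1 : ℤ) ^ ((σ j).card)) *
              (∑ τ ∈ Fintype.piFinset (fun _ : Fin m => Tset),
                if (interTuple τ).Nonempty then ∏ j, (-1 : ℤ) ^ ((τ j).card) else 0)) := by
  rw [master m x E Tset D hE hT hD
    (fun X => if (interTuple X).Nonempty then ∏ j, (-1 : ℤ) ^ ((X j).card) else 0),
    Finset.sum_product]
  refine Finset.sum_congr rfl (fun σ hσ => ?_)
  rw [Fintype.mem_piFinset] at hσ
  have hσd : ∀ j, Disjoint (σ j) x := fun j => hE _ (hσ j)
  by_cases hc : (interTuple σ).Nonempty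
  · rw [if_pos hc, Finset.mul_sum]
    refine Finset.sum_congr rfl (fun τ hτ => ?_)
    rw [Fintype.mem_piFinset] at hτ
    have hτs : ∀ j, τ j ⊆ x := fun j => Finset.mem_powerset.mp (hT (hτ j))
    have hu := interTuple_union hm hσd hτs
    have hne : (interTuple fun j => σ j ∪ τ j).Nonempty := by
      rw [hu]; exact hc.mono subset_union_left
    rw [if_pos hne, ← Finset.prod_mul_distrib]
    refine Finset.prod_congr rfl (fun j _ => ?_)
    rw [← pow_add, Finset.card_union_of_disjoint (Finset.disjoint_of_subset_right (hτs j) (hσd j))]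
  · rw [if_neg hc, Finset.mul_sum]
    refine Finset.sum_congr rfl (fun τ hτ => ?_)
    rw [Fintype.mem_piFinset] at hτ
    have hτs : ∀ j, τ j ⊆ x := fun j => Finset.mem_powerset.mp (hT (hτ j))
    have hu := interTuple_union hm hσd hτs
    by_cases hcτ : (interTuple τ).Nonempty
    · have hne : (interTuple fun j => σ j ∪ τ j).Nonempty := by
        rw [hu]; exact hcτ.mono subset_union_right
      rw [if_pos hne, if_pos hcτ, ← Finset.prod_mul_distrib]
      refine Finset.prod_congr rfl (fun j _ => ?_)
      rw [← pow_add, Finset.card_union_of_disjoint (Finset.disjoint_of_subset_right (hτs j) (hσd j))]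
    · have hne : ¬ (interTuple fun j => σ j ∪ τ j).Nonempty := by
        rw [hu]
        rintro ⟨a, ha⟩
        rcases Finset.mem_union.mp ha with h | h
        · exact hc ⟨a, h⟩
        · exact hcτ ⟨a, h⟩
      rw [if_neg hne, if_neg hcτ, mul_zero]

lemma wm_ball_eq (hG : IsComplex G) (hx : x ∈ G) (m : ℕ) (hm : 1 ≤ m) :
    wm m (ballC G x) = (-1 : ℤ) ^ m *
      ∑ σ ∈ Fintype.piFinset
          (fun _ : Fin m => insert ∅ (G.filter fun s => Disjoint s x ∧ s ∪ x ∈ G)),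
        (if (interTuple σ).Nonempty then (∏ j, (-1 : ℤ) ^ ((σ j).card)) * 0
          else (∏ j, (-1 : ℤ) ^ ((σ j).card)) * (-((-1 : ℤ) ^ x.card) * ((-1 : ℤ) ^ x.card) ^ m)) := by
  have hxne : x.Nonempty := hG.1 x hx
  rw [wm_eq m (ballC G x) (fun z hz => hG.1 z (Finset.filter_subset _ _ hz))]
  congr 1
  have cond : ∀ X ∈ Fintype.piFinset (fun _ : Fin m => ballC G x),
      (if interTuple X ∈ ballC G x then ∏ j, (-1 : ℤ) ^ ((X j).card) else 0)
      = (if (interTuple X).Nonempty then ∏ j, (-1 : ℤ) ^ ((X j).card) else 0) := by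
    intro X hX
    rw [Fintype.mem_piFinset] at hX
    congr 1
    rw [eq_iff_iff]
    constructor
    · exact fun h => ((mem_ballC_iff hG hx).mp h).1
    · intro hne
      refine (mem_ballC_iff hG hx).mpr ⟨hne, ?_⟩
      have hj0 := (mem_ballC_iff hG hx).mp (hX ⟨0, hm⟩)
      refine hG.2 _ hj0.2 _ (Finset.union_subset_union_left (interTuple_subset hm X ⟨0, hm⟩)) ?_
      exact ⟨hxne.choose, Finset.mem_union_right _ hxne.choose_spec⟩
  rw [Finset.sum_congr rfl cond]
  rw [sum_insert_empty m (ballC G x)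
    (fun h => by simpa using Finset.nonempty_iff_ne_empty.mp (hG.1 ∅ (Finset.filter_subset _ _ h)))
    _ (fun X ⟨j, hj⟩ => by
      rw [if_neg]
      intro ⟨a, ha⟩
      have := interTuple_subset hm X j ha
      rw [hj] at this
      exact absurd this (Finset.notMem_empty a))]
  rw [reduce_core m hm _ x.powerset (insert ∅ (ballC G x))
    (fun z hz => ((mem_E_iff hG hx).mp hz).1) subset_rfl
    (fun z => by
      rw [mem_ball0_iff hG hx, mem_E_iff hG hx]
      simp [Finset.sdiff_union_self_eq_union, Finset.sdiff_disjoint])]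
  refine Finset.sum_congr rfl (fun σ _ => ?_)
  rw [tau_total hm hxne, A1_ball hm hxne]

lemma wm_star_eq (hG : IsComplex G) (hx : x ∈ G) (m : ℕ) (hm : 1 ≤ m) :
    wm m (starC G x) = (-1 : ℤ) ^ m *
      ∑ σ ∈ Fintype.piFinset
          (fun _ : Fin m => insert ∅ (G.filter fun s => Disjoint s x ∧ s ∪ x ∈ G)),
        (∏ j, (-1 : ℤ) ^ ((σ j).card)) * ((-1 : ℤ) ^ x.card) ^ m := by
  have hxne : x.Nonempty := hG.1 x hx
  rw [wm_eq m (starC G x) (fun z hz => hG.1 z (Finset.filter_subset _ _ hz))]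
  congr 1
  have cond : ∀ X ∈ Fintype.piFinset (fun _ : Fin m => starC G x),
      (if interTuple X ∈ starC G x then ∏ j, (-1 : ℤ) ^ ((X j).card) else 0)
      = (if (interTuple X).Nonempty then ∏ j, (-1 : ℤ) ^ ((X j).card) else 0) := by
    intro X hX
    rw [Fintype.mem_piFinset] at hX
    have hxsub : x ⊆ interTuple X := by
      intro a ha
      rw [mem_interTuple hm]
      exact fun j => ((mem_starC_iff hG hx).mp (hX j)).2 ha
    have hmem : interTuple X ∈ starC G x := by
      refine (mem_starC_iff hG hx).mpr ⟨?_, hxsub⟩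
      rw [Finset.union_eq_left.mpr hxsub]
      have hj0 : X ⟨0, hm⟩ ∈ G := Finset.filter_subset _ _ (hX ⟨0, hm⟩)
      exact hG.2 _ hj0 _ (interTuple_subset hm X ⟨0, hm⟩) (hxne.mono hxsub)
    rw [if_pos hmem, if_pos (hxne.mono hxsub)]
  rw [Finset.sum_congr rfl cond]
  rw [reduce_core m hm _ ({x} : Finset (Finset ℕ)) (starC G x)
    (fun z hz => ((mem_E_iff hG hx).mp hz).1)
    (by simp)
    (fun z => by
      rw [mem_starC_iff hG hx, mem_E_iff hG hx, Finset.mem_singleton, Finset.inter_eq_right]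
      simp [Finset.sdiff_union_self_eq_union, Finset.sdiff_disjoint])]
  refine Finset.sum_congr rfl (fun σ _ => ?_)
  have hconst : ∀ τ ∈ Fintype.piFinset (fun _ : Fin m => ({x} : Finset (Finset ℕ))),
      (if (interTuple τ).Nonempty then ∏ j, (-1 : ℤ) ^ ((τ j).card) else 0)
        = ∏ j, (-1 : ℤ) ^ ((τ j).card) := by
    intro τ hτ
    rw [Fintype.mem_piFinset] at hτ
    have : x ⊆ interTuple τ := by
      intro a ha
      rw [mem_interTuple hm]
      intro j
      rw [Finset.mem_singleton.mp (hτ j)]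
      exact ha
    rw [if_pos (hxne.mono this)]
  rw [Finset.sum_congr rfl hconst, tau_single x, ite_self]

lemma wm_sphere_eq (hG : IsComplex G) (hx : x ∈ G) (m : ℕ) (hm : 1 ≤ m) :
    wm m (sphereC G x) = (-1 : ℤ) ^ m *
      ∑ σ ∈ Fintype.piFinset
          (fun _ : Fin m => insert ∅ (G.filter fun s => Disjoint s x ∧ s ∪ x ∈ G)),
        (if (interTuple σ).Nonempty
          then (∏ j, (-1 : ℤ) ^ ((σ j).card)) * (-(-1 : ℤ) ^ x.card) ^ m
          else (∏ j, (-1 : ℤ) ^ ((σ j).card)) * ((-(-1 : ℤ) ^ x.card) ^ m * (1 + (-1 : ℤ) ^ x.card))) := by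
  have hxne : x.Nonempty := hG.1 x hx
  have hsub : sphereC G x ⊆ G := fun z hz =>
    Finset.filter_subset _ _ ((Finset.mem_sdiff.mp hz).1)
  rw [wm_eq m (sphereC G x) (fun z hz => hG.1 z (hsub hz))]
  congr 1
  have cond : ∀ X ∈ Fintype.piFinset (fun _ : Fin m => sphereC G x),
      (if interTuple X ∈ sphereC G x then ∏ j, (-1 : ℤ) ^ ((X j).card) else 0)
      = (if (interTuple X).Nonempty then ∏ j, (-1 : ℤ) ^ ((X j).card) else 0) := by
    intro X hX
    rw [Fintype.mem_piFinset] at hX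
    congr 1
    rw [eq_iff_iff]
    constructor
    · intro h
      exact ((mem_ballC_iff hG hx).mp (Finset.mem_sdiff.mp h).1).1
    · intro hne
      have hj0 := Finset.mem_sdiff.mp (hX ⟨0, hm⟩)
      have hj0b := (mem_ballC_iff hG hx).mp hj0.1
      have hball : interTuple X ∈ ballC G x := by
        refine (mem_ballC_iff hG hx).mpr ⟨hne, ?_⟩
        refine hG.2 _ hj0b.2 _ (Finset.union_subset_union_left (interTuple_subset hm X ⟨0, hm⟩)) ?_
        exact ⟨hxne.choose, Finset.mem_union_right _ hxne.choose_spec⟩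
      refine Finset.mem_sdiff.mpr ⟨hball, fun hstar => ?_⟩
      have hxsub : x ⊆ X ⟨0, hm⟩ :=
        ((mem_starC_iff hG hx).mp hstar).2.trans (interTuple_subset hm X ⟨0, hm⟩)
      exact hj0.2 ((mem_starC_iff hG hx).mpr ⟨hj0b.2, hxsub⟩)
  rw [Finset.sum_congr rfl cond]
  rw [sum_insert_empty m (sphereC G x)
    (fun h => by simpa using Finset.nonempty_iff_ne_empty.mp (hG.1 ∅ (hsub h)))
    _ (fun X ⟨j, hj⟩ => by
      rw [if_neg]
      intro ⟨a, ha⟩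
      have := interTuple_subset hm X j ha
      rw [hj] at this
      exact absurd this (Finset.notMem_empty a))]
  rw [reduce_core m hm _ (x.powerset.erase x) (insert ∅ (sphereC G x))
    (fun z hz => ((mem_E_iff hG hx).mp hz).1)
    (Finset.erase_subset _ _)
    (fun z => by
      rw [mem_sphere0_iff hG hx, mem_E_iff hG hx, Finset.mem_erase]
      have : z ∩ x = x ↔ x ⊆ z := Finset.inter_eq_right
      simp [Finset.sdiff_union_self_eq_union, this, Finset.sdiff_disjoint])]
  refine Finset.sum_congr rfl (fun σ _ => ?_)
  rw [tau_total_sphere hxne, A1_sphere hm hxne]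

end Reduce

/-- Local valuation formula: `w_m(B(x)) = w_m(U(x)) - (-1)^m w_m(S(x))`. -/
theorem local_valuation_formula (G : Finset (Finset ℕ)) (hG : IsComplex G)
    (x : Finset ℕ) (hx : x ∈ G) (m : ℕ) (hm : 1 ≤ m) :
    wm m (ballC G x) = wm m (starC G x) - (-1 : ℤ) ^ m * wm m (sphereC G x) := by
  rw [wm_ball_eq hG hx m hm, wm_star_eq hG hx m hm, wm_sphere_eq hG hx m hm]
  have hee : (-1 : ℤ) ^ m * (-1 : ℤ) ^ m = 1 := by
    rw [← pow_add]
    exact Even.neg_one_pow ⟨m, rfl⟩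
  set E := insert ∅ (G.filter fun s => Disjoint s x ∧ s ∪ x ∈ G) with hE
  set d : ℤ := (-1 : ℤ) ^ x.card with hd
  set e : ℤ := (-1 : ℤ) ^ m with he
  have hnd : (-d) ^ m = e * d ^ m := by rw [neg_pow]
  rw [← mul_assoc, hee, one_mul, Finset.mul_sum, Finset.mul_sum,
    ← Finset.sum_sub_distrib]
  refine Finset.sum_congr rfl (fun σ _ => ?_)
  by_cases hc : (interTuple σ).Nonempty
  · rw [if_pos hc, if_pos hc, hnd]
    ring
  · rw [if_neg hc, if_neg hc, hnd]
    ring
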